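/- arXiv:math/0112157 — 7 statements merged into one kernel-verified Lean document; each statement's English description precedes it below -/
import Mathlib

section
/- Let V be a real inner product space of dimension 4n carrying a quaternionic Hermitian structure (J₁,J₂,J₃), and let T be a 3-form on V of type (1,2)+(2,1) with respect to each J_α, α = 1,2,3. Then for every orthonormal basis (e_1,…,e_{4n}) of V and every cyclic permutation (α,β,γ) of (1,2,3) one has Σ_{i,j,k=1}^{4n} T(e_i,e_j,e_k) · T(J_γ e_i, J_β e_j, e_k) = 0 (equivalently, Σ_{i,j} g(T(e_i,e_j), T(J_γ e_i, J_β e_j)) = 0, where T(X,Y) denotes the vector with g(T(X,Y),Z) = T(X,Y,Z)). -/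
/-!
Write `⟨A, B, C | P, Q, R⟩` for `∑ T(A eᵢ, B eⱼ, C eₖ) · T(P eᵢ, Q eⱼ, R eₖ)`. Since `b := Jβ` is
skew-adjoint, it can be moved from a slot of the left factor to the same slot of the right one at
the cost of a sign, and the antisymmetry of `T` lets slots be permuted simultaneously in both
factors. Expanding `⟨1, 1, 1 | 1, 1, a⟩` (with `a := Jα`, `c := Jγ`) by the type condition for `b`,
once in the left factor and once in the right one, gives `W + Y + X` and `W - Y - X`, where
`X = ⟨1, 1, 1 | 1, b, c⟩` and `Y = ⟨1, 1, 1 | b, 1, c⟩`: the sign differs because `a b = c` while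
`b a = -c`. As `X = Y` by antisymmetry, `X = 0`, and `X` is the required sum up to exchanging the
first and third slots.
-/

open scoped RealInnerProductSpace

section

variable {ι V : Type*} [Fintype ι] [NormedAddCommGroup V] [InnerProductSpace ℝ V]

theorem inner_map_eq_neg_inner_map_of_sq_eq_neg {J : V →ₗ[ℝ] V}
    (horth : ∀ x y : V, ⟪J x, J y⟫ = ⟪x, y⟫) (hsq : ∀ x : V, J (J x) = -x) (x y : V) :
    ⟪J x, y⟫ = -⟪x, J y⟫ := by
  rw [← horth (J x) y, hsq, inner_neg_left]

theorem OrthonormalBasis.sum_map_mul_eq_neg_sum_mul_map (e : OrthonormalBasis ι ℝ V)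
    {J : V →ₗ[ℝ] V} (hJ : ∀ x y : V, ⟪J x, y⟫ = -⟪x, J y⟫) (u v : V →ₗ[ℝ] ℝ) :
    ∑ i, u (J (e i)) * v (e i) = -∑ i, u (e i) * v (J (e i)) := by
  have expand (w : V →ₗ[ℝ] ℝ) (x : V) : w x = ∑ j, ⟪e j, x⟫ * w (e j) := by
    conv_lhs => rw [← e.sum_repr' x]
    simp [map_sum, map_smul]
  calc ∑ i, u (J (e i)) * v (e i)
      = ∑ i, ∑ j, ⟪e j, J (e i)⟫ * u (e j) * v (e i) := by
        simp only [expand u (J _), Finset.sum_mul]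
    _ = ∑ j, ∑ i, -(u (e j) * (⟪e i, J (e j)⟫ * v (e i))) := by
        rw [Finset.sum_comm]
        refine Finset.sum_congr rfl fun j _ => Finset.sum_congr rfl fun i _ => ?_
        rw [real_inner_comm, ← neg_neg ⟪J (e i), e j⟫, hJ]; ring
    _ = -∑ i, u (e i) * v (J (e i)) := by
        simp only [expand v (J _), Finset.mul_sum, Finset.sum_neg_distrib]

variable (e : OrthonormalBasis ι ℝ V) (T : V →ₗ[ℝ] V →ₗ[ℝ] V →ₗ[ℝ] ℝ)

noncomputable def mixedPairing (A B C P Q R : Module.End ℝ V) : ℝ :=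
  ∑ i, ∑ j, ∑ k, T (A (e i)) (B (e j)) (C (e k)) * T (P (e i)) (Q (e j)) (R (e k))

theorem mixedPairing_comm (A B C P Q R : Module.End ℝ V) :
    mixedPairing e T A B C P Q R = mixedPairing e T P Q R A B C := by
  simp only [mixedPairing, mul_comm]

theorem mixedPairing_neg_thd (A B C P Q R : Module.End ℝ V) :
    mixedPairing e T A B (-C) P Q R = -mixedPairing e T A B C P Q R := by
  simp [mixedPairing]

theorem mixedPairing_swap₁₂ (halt : ∀ x y z : V, T x y z = -T y x z)
    (A B C P Q R : Module.End ℝ V) :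
    mixedPairing e T A B C P Q R = mixedPairing e T B A C Q P R := by
  rw [mixedPairing, Finset.sum_comm]
  refine Finset.sum_congr rfl fun j _ => Finset.sum_congr rfl fun i _ =>
    Finset.sum_congr rfl fun k _ => ?_
  rw [halt (A (e i)), halt (P (e i)), neg_mul_neg]

theorem mixedPairing_swap₂₃ (halt : ∀ x y z : V, T x y z = -T x z y)
    (A B C P Q R : Module.End ℝ V) :
    mixedPairing e T A B C P Q R = mixedPairing e T A C B P R Q := by
  refine Finset.sum_congr rfl fun i _ => ?_
  rw [Finset.sum_comm]
  refine Finset.sum_congr rfl fun k _ => Finset.sum_congr rfl fun j _ => ?_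
  rw [halt (A (e i)), halt (P (e i)), neg_mul_neg]

theorem mixedPairing_swap₁₃ (halt₁₂ : ∀ x y z : V, T x y z = -T y x z)
    (halt₂₃ : ∀ x y z : V, T x y z = -T x z y) (A B C P Q R : Module.End ℝ V) :
    mixedPairing e T A B C P Q R = mixedPairing e T C B A R Q P := by
  rw [mixedPairing_swap₁₂ e T halt₁₂, mixedPairing_swap₂₃ e T halt₂₃,
    mixedPairing_swap₁₂ e T halt₁₂]

theorem mixedPairing_skew_thd {J : Module.End ℝ V} (hJ : ∀ x y : V, ⟪J x, y⟫ = -⟪x, J y⟫)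
    (A B P Q R : Module.End ℝ V) :
    mixedPairing e T A B J P Q R = -mixedPairing e T A B 1 P Q (R * J) := by
  simp only [mixedPairing, Module.End.one_apply, Module.End.mul_apply, ← Finset.sum_neg_distrib]
  refine Finset.sum_congr rfl fun i _ => Finset.sum_congr rfl fun j _ => ?_
  rw [Finset.sum_neg_distrib]
  exact e.sum_map_mul_eq_neg_sum_mul_map hJ (T (A (e i)) (B (e j))) (T (P (e i)) (Q (e j)) ∘ₗ R)

theorem mixedPairing_skew_snd (halt : ∀ x y z : V, T x y z = -T x z y) {J : Module.End ℝ V}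
    (hJ : ∀ x y : V, ⟪J x, y⟫ = -⟪x, J y⟫) (A C P Q R : Module.End ℝ V) :
    mixedPairing e T A J C P Q R = -mixedPairing e T A 1 C P (Q * J) R := by
  rw [mixedPairing_swap₂₃ e T halt, mixedPairing_skew_thd e T hJ, mixedPairing_swap₂₃ e T halt]

theorem mixedPairing_skew_fst (halt₁₂ : ∀ x y z : V, T x y z = -T y x z)
    (halt₂₃ : ∀ x y z : V, T x y z = -T x z y) {J : Module.End ℝ V}
    (hJ : ∀ x y : V, ⟪J x, y⟫ = -⟪x, J y⟫) (B C P Q R : Module.End ℝ V) :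
    mixedPairing e T J B C P Q R = -mixedPairing e T 1 B C (P * J) Q R := by
  rw [mixedPairing_swap₁₃ e T halt₁₂ halt₂₃, mixedPairing_skew_thd e T hJ,
    mixedPairing_swap₁₃ e T halt₁₂ halt₂₃]

theorem mixedPairing_eq_add_of_type {J : Module.End ℝ V}
    (htype : ∀ x y z : V, T x y z = T (J x) (J y) z + T (J x) y (J z) + T x (J y) (J z))
    (A B C P Q R : Module.End ℝ V) :
    mixedPairing e T A B C P Q R = mixedPairing e T (J * A) (J * B) C P Q R
      + mixedPairing e T (J * A) B (J * C) P Q R + mixedPairing e T A (J * B) (J * C) P Q R := by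
  simp only [mixedPairing, ← Finset.sum_add_distrib]
  refine Finset.sum_congr rfl fun i _ => Finset.sum_congr rfl fun j _ =>
    Finset.sum_congr rfl fun k _ => ?_
  rw [htype (A (e i))]
  simp only [Module.End.mul_apply]
  ring

theorem mixedPairing_eq_zero_of_anticomm {a b c : Module.End ℝ V}
    (hb : ∀ x y : V, ⟪b x, y⟫ = -⟪x, b y⟫) (hab : a * b = c) (hba : b * a = -c)
    (halt₁₂ : ∀ x y z : V, T x y z = -T y x z) (halt₂₃ : ∀ x y z : V, T x y z = -T x z y)
    (htype : ∀ x y z : V, T x y z = T (b x) (b y) z + T (b x) y (b z) + T x (b y) (b z)) :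
    mixedPairing e T 1 1 1 c b 1 = 0 := by
  have shift_fst := mixedPairing_skew_fst e T halt₁₂ halt₂₃ hb
  have shift_snd := mixedPairing_skew_snd e T halt₂₃ hb
  have shift_thd := mixedPairing_skew_thd e T hb
  have first : mixedPairing e T 1 1 1 1 1 a = mixedPairing e T 1 1 1 b b a
      + mixedPairing e T 1 1 1 b 1 c + mixedPairing e T 1 1 1 1 b c := by
    rw [mixedPairing_eq_add_of_type e T htype]
    simp only [mul_one]
    -- move both `b`s of each term to the right factor
    rw [shift_fst, shift_snd, shift_fst, shift_thd, shift_snd, shift_thd]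
    simp only [one_mul, neg_neg, hab]
  have second : mixedPairing e T 1 1 1 1 1 a = mixedPairing e T 1 1 1 b b a
      - mixedPairing e T 1 1 1 b 1 c - mixedPairing e T 1 1 1 1 b c := by
    rw [mixedPairing_comm, mixedPairing_eq_add_of_type e T htype]
    simp only [mul_one, hba, mixedPairing_neg_thd]
    rw [mixedPairing_comm e T b b a, mixedPairing_comm e T b 1 c, mixedPairing_comm e T 1 b c]
    ring
  have hswap := mixedPairing_swap₁₂ e T halt₁₂ 1 1 1 b 1 c
  rw [mixedPairing_swap₁₃ e T halt₁₂ halt₂₃]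
  linarith

end

theorem mul_cyclic_of_anticomm {R : Type*} [Ring R] {a b c : R} (hab : a * b = c)
    (hba : b * a = -c) (hb : b * b = -1) : b * c = a ∧ c * b = -a := by
  have hcb : c * b = -a := by rw [← hab, mul_assoc, hb, mul_neg_one]
  refine ⟨?_, hcb⟩
  rw [← hab, ← mul_assoc, hba, neg_mul, hcb, neg_neg]

theorem qkt_lemma_mixed_trace_zero_general
    {V : Type*} [NormedAddCommGroup V] [InnerProductSpace ℝ V]
    (n : ℕ)
    (J1 J2 J3 : V →ₗ[ℝ] V)
    (horth : ∀ J ∈ ({J1, J2, J3} : Set (V →ₗ[ℝ] V)), ∀ x y : V, ⟪J x, J y⟫ = ⟪x, y⟫)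
    (hsq : ∀ J ∈ ({J1, J2, J3} : Set (V →ₗ[ℝ] V)), ∀ x : V, J (J x) = -x)
    (h12 : ∀ x : V, J1 (J2 x) = J3 x)
    (h21 : ∀ x : V, J2 (J1 x) = -J3 x)
    (T : V →ₗ[ℝ] V →ₗ[ℝ] V →ₗ[ℝ] ℝ)
    (halt1 : ∀ x y z : V, T x y z = -T y x z)
    (halt2 : ∀ x y z : V, T x y z = -T x z y)
    (htype : ∀ J ∈ ({J1, J2, J3} : Set (V →ₗ[ℝ] V)), ∀ x y z : V,
      T x y z = T (J x) (J y) z + T (J x) y (J z) + T x (J y) (J z))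
    (e : OrthonormalBasis (Fin (4 * n)) ℝ V) :
    ∀ Ja Jb Jc : V →ₗ[ℝ] V,
      ((Ja, Jb, Jc) = (J1, J2, J3) ∨ (Ja, Jb, Jc) = (J2, J3, J1) ∨
        (Ja, Jb, Jc) = (J3, J1, J2)) →
      ∑ i, ∑ j, ∑ k, T (e i) (e j) (e k) * T (Jc (e i)) (Jb (e j)) (e k) = 0 := by
  have key {a b c : Module.End ℝ V} (hb : b ∈ ({J1, J2, J3} : Set (V →ₗ[ℝ] V)))
      (hab : a * b = c) (hba : b * a = -c) : mixedPairing e T 1 1 1 c b 1 = 0 :=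
    mixedPairing_eq_zero_of_anticomm e T
      (inner_map_eq_neg_inner_map_of_sq_eq_neg (horth b hb) (hsq b hb)) hab hba halt1 halt2
      (htype b hb)
  have hsq' (J) (hJ : J ∈ ({J1, J2, J3} : Set (V →ₗ[ℝ] V))) : J * J = -1 :=
    LinearMap.ext (hsq J hJ)
  have h12' : J1 * J2 = J3 := LinearMap.ext h12
  have h21' : J2 * J1 = -J3 := LinearMap.ext h21
  obtain ⟨h23, h32⟩ := mul_cyclic_of_anticomm h12' h21' (hsq' J2 (by simp))
  obtain ⟨h31, h13⟩ := mul_cyclic_of_anticomm h23 h32 (hsq' J3 (by simp))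
  intro Ja Jb Jc hcyc
  simp only [Prod.mk.injEq] at hcyc
  rcases hcyc with ⟨rfl, rfl, rfl⟩ | ⟨rfl, rfl, rfl⟩ | ⟨rfl, rfl, rfl⟩
  exacts [key (by simp) h12' h21', key (by simp) h23 h32, key (by simp) h31 h13]

/-- On a real inner product space of dimension `4n` with a quaternionic
Hermitian structure `(J1, J2, J3)`, for any 3-form `T` of type (1,2)+(2,1) with respect to
each `Jα`, any orthonormal basis `(e i)`, and any cyclic permutation `(Ja, Jb, Jc)` of
`(J1, J2, J3)`, one has `∑ T(eᵢ,eⱼ,eₖ) · T(Jc eᵢ, Jb eⱼ, eₖ) = 0`. -/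
theorem qkt_lemma_mixed_trace_zero
    {V : Type*} [NormedAddCommGroup V] [InnerProductSpace ℝ V] [FiniteDimensional ℝ V]
    (n : ℕ) (hdim : Module.finrank ℝ V = 4 * n)
    (J1 J2 J3 : V →ₗ[ℝ] V)
    (horth : ∀ J ∈ ({J1, J2, J3} : Set (V →ₗ[ℝ] V)), ∀ x y : V, ⟪J x, J y⟫ = ⟪x, y⟫)
    (hsq : ∀ J ∈ ({J1, J2, J3} : Set (V →ₗ[ℝ] V)), ∀ x : V, J (J x) = -x)
    (h12 : ∀ x : V, J1 (J2 x) = J3 x)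
    (h21 : ∀ x : V, J2 (J1 x) = -J3 x)
    (T : V →ₗ[ℝ] V →ₗ[ℝ] V →ₗ[ℝ] ℝ)
    (halt1 : ∀ x y z : V, T x y z = -T y x z)
    (halt2 : ∀ x y z : V, T x y z = -T x z y)
    (htype : ∀ J ∈ ({J1, J2, J3} : Set (V →ₗ[ℝ] V)), ∀ x y z : V,
      T x y z = T (J x) (J y) z + T (J x) y (J z) + T x (J y) (J z))
    (e : OrthonormalBasis (Fin (4 * n)) ℝ V) :
    ∀ Ja Jb Jc : V →ₗ[ℝ] V,
      ((Ja, Jb, Jc) = (J1, J2, J3) ∨ (Ja, Jb, Jc) = (J2, J3, J1) ∨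
        (Ja, Jb, Jc) = (J3, J1, J2)) →
      ∑ i, ∑ j, ∑ k, T (e i) (e j) (e k) * T (Jc (e i)) (Jb (e j)) (e k) = 0 :=
  qkt_lemma_mixed_trace_zero_general n J1 J2 J3 horth hsq h12 h21 T halt1 halt2 htype e
end

section
/- Let V be a real inner product space of dimension 4n carrying a quaternionic Hermitian structure (J₁,J₂,J₃), and let T be a 3-form on V of type (1,2)+(2,1) with respect to each J_α, α = 1,2,3. Then for every orthonormal basis (e_1,…,e_{4n}) of V and every β ∈ {1,2,3} one has Σ_{i,j,k=1}^{4n} T(e_i,e_j,e_k) · T(J_β e_i, J_β e_j, e_k) = (1/3)·‖T‖², where ‖T‖² = Σ_{i,j,k=1}^{4n} T(e_i,e_j,e_k)². -/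
open scoped RealInnerProductSpace

private lemma triple_rev {N : ℕ} (f : Fin N → Fin N → Fin N → ℝ) :
    ∑ i, ∑ j, ∑ k, f k j i = ∑ i, ∑ j, ∑ k, f i j k := by
  have h1 : ∑ i, ∑ j, ∑ k, f k j i = ∑ i, ∑ k, ∑ j, f k j i :=
    Finset.sum_congr rfl fun i _ => Finset.sum_comm
  have h2 : ∑ i, ∑ k, ∑ j, f k j i = ∑ k, ∑ i, ∑ j, f k j i := Finset.sum_comm
  have h3 : ∑ k, ∑ i, ∑ j, f k j i = ∑ k, ∑ j, ∑ i, f k j i :=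
    Finset.sum_congr rfl fun k _ => Finset.sum_comm
  rw [h1, h2, h3]

/-- On a `4n`-dimensional real inner product space with a quaternionic
Hermitian structure `(J1, J2, J3)` and a 3-form `T` of type (1,2)+(2,1) with respect to each
`Jα`, for every orthonormal basis `(e i)` and every `Jb ∈ {J1, J2, J3}`,
`∑ T(eᵢ,eⱼ,eₖ) · T(Jb eᵢ, Jb eⱼ, eₖ) = (1/3)‖T‖²`. -/
theorem qkt_lemma_diagonal_trace
    {V : Type*} [NormedAddCommGroup V] [InnerProductSpace ℝ V] [FiniteDimensional ℝ V]
    (n : ℕ) (hdim : Module.finrank ℝ V = 4 * n)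
    (J1 J2 J3 : V →ₗ[ℝ] V)
    (horth : ∀ J ∈ ({J1, J2, J3} : Set (V →ₗ[ℝ] V)), ∀ x y : V, ⟪J x, J y⟫ = ⟪x, y⟫)
    (hsq : ∀ J ∈ ({J1, J2, J3} : Set (V →ₗ[ℝ] V)), ∀ x : V, J (J x) = -x)
    (h12 : ∀ x : V, J1 (J2 x) = J3 x)
    (h21 : ∀ x : V, J2 (J1 x) = -J3 x)
    (T : V →ₗ[ℝ] V →ₗ[ℝ] V →ₗ[ℝ] ℝ)
    (halt1 : ∀ x y z : V, T x y z = -T y x z)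
    (halt2 : ∀ x y z : V, T x y z = -T x z y)
    (htype : ∀ J ∈ ({J1, J2, J3} : Set (V →ₗ[ℝ] V)), ∀ x y z : V,
      T x y z = T (J x) (J y) z + T (J x) y (J z) + T x (J y) (J z))
    (e : OrthonormalBasis (Fin (4 * n)) ℝ V) :
    ∀ Jb ∈ ({J1, J2, J3} : Set (V →ₗ[ℝ] V)),
      ∑ i, ∑ j, ∑ k, T (e i) (e j) (e k) * T (Jb (e i)) (Jb (e j)) (e k) =
        (1 / 3) * ∑ i, ∑ j, ∑ k, (T (e i) (e j) (e k)) ^ 2 := by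
  intro Jb hJb
  have h13 : ∀ x y z : V, T x y z = -T z y x := by
    intro x y z
    rw [halt1, halt2, halt1]; ring
  set A := ∑ i, ∑ j, ∑ k, T (e i) (e j) (e k) * T (Jb (e i)) (Jb (e j)) (e k) with hA
  have hB : (∑ i, ∑ j, ∑ k, T (e i) (e j) (e k) * T (Jb (e i)) (e j) (Jb (e k))) = A := by
    rw [hA]
    refine Finset.sum_congr rfl fun i _ => ?_
    have step : ∀ j k : Fin (4*n), T (e i) (e j) (e k) * T (Jb (e i)) (e j) (Jb (e k))
        = T (e i) (e k) (e j) * T (Jb (e i)) (Jb (e k)) (e j) := by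
      intro j k
      rw [halt2 (e i) (e k) (e j), halt2 (Jb (e i)) (Jb (e k)) (e j)]
      ring
    simp_rw [step]
    exact Finset.sum_comm
  have hC : (∑ i, ∑ j, ∑ k, T (e i) (e j) (e k) * T (e i) (Jb (e j)) (Jb (e k))) = A := by
    rw [hA]
    have step : ∀ i j k : Fin (4*n), T (e i) (e j) (e k) * T (e i) (Jb (e j)) (Jb (e k))
        = T (e k) (e j) (e i) * T (Jb (e k)) (Jb (e j)) (e i) := by
      intro i j k
      rw [h13 (e k) (e j) (e i), h13 (Jb (e k)) (Jb (e j)) (e i)]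
      ring
    simp_rw [step]
    exact triple_rev _
  have hexp : ∀ i j k : Fin (4*n), (T (e i) (e j) (e k)) ^ 2
      = T (e i) (e j) (e k) * T (Jb (e i)) (Jb (e j)) (e k)
      + T (e i) (e j) (e k) * T (Jb (e i)) (e j) (Jb (e k))
      + T (e i) (e j) (e k) * T (e i) (Jb (e j)) (Jb (e k)) := by
    intro i j k
    have h := htype Jb hJb (e i) (e j) (e k)
    rw [sq]
    nth_rewrite 2 [h]
    ring
  have hsum : ∑ i, ∑ j, ∑ k, (T (e i) (e j) (e k)) ^ 2 = 3 * A := by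
    simp_rw [hexp, Finset.sum_add_distrib]
    rw [hB, hC]
    ring
  rw [hsum]; ring
end

section
/- Let V be a finite-dimensional real inner product space, J an orthogonal endomorphism of V with J² = −id, and T a 3-form on V of type (1,2)+(2,1) with respect to J. Then for every orthonormal basis (e_i) of V one has Σ_{i,j,k} T(e_i,e_j,e_k) · T(J e_i, J e_j, e_k) = (1/3)·‖T‖², where ‖T‖² = Σ_{i,j,k} T(e_i,e_j,e_k)². -/
open scoped RealInnerProductSpace

/-- Let `V` be a finite-dimensional real inner product space, `J` an
orthogonal complex structure on `V`, and `T` a 3-form of type (1,2)+(2,1) with respect to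
`J`. Then for every orthonormal basis `(e i)` of `V`,
`∑ T(eᵢ,eⱼ,eₖ) · T(J eᵢ, J eⱼ, eₖ) = (1/3)·‖T‖²`. -/
theorem three_form_type_trace_identity
    {V : Type*} [NormedAddCommGroup V] [InnerProductSpace ℝ V] [FiniteDimensional ℝ V]
    (J : V →ₗ[ℝ] V)
    (horth : ∀ x y : V, ⟪J x, J y⟫ = ⟪x, y⟫)
    (hsq : ∀ x : V, J (J x) = -x)
    (T : V →ₗ[ℝ] V →ₗ[ℝ] V →ₗ[ℝ] ℝ)
    (halt1 : ∀ x y z : V, T x y z = -T y x z)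
    (halt2 : ∀ x y z : V, T x y z = -T x z y)
    (htype : ∀ x y z : V,
      T x y z = T (J x) (J y) z + T (J x) y (J z) + T x (J y) (J z))
    {ι : Type*} [Fintype ι] (e : OrthonormalBasis ι ℝ V) :
    ∑ i, ∑ j, ∑ k, T (e i) (e j) (e k) * T (J (e i)) (J (e j)) (e k) =
      (1 / 3) * ∑ i, ∑ j, ∑ k, (T (e i) (e j) (e k)) ^ 2 := by
  set S := ∑ i, ∑ j, ∑ k, T (e i) (e j) (e k) * T (J (e i)) (J (e j)) (e k) with hS
  -- Second sum equals S (swap j and k)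
  have h2 : (∑ i, ∑ j, ∑ k, T (e i) (e j) (e k) * T (J (e i)) (e j) (J (e k))) = S := by
    rw [hS]
    refine Finset.sum_congr rfl fun i _ => ?_
    rw [Finset.sum_comm]
    refine Finset.sum_congr rfl fun j _ => Finset.sum_congr rfl fun k _ => ?_
    rw [halt2 (e i) (e k) (e j), halt2 (J (e i)) (e k) (J (e j))]
    ring
  -- Third sum equals S (swap i and k)
  have swap13 : ∀ F : ι → ι → ι → ℝ,
      (∑ i, ∑ j, ∑ k, F i j k) = ∑ i, ∑ j, ∑ k, F k j i := by
    intro F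
    calc (∑ i, ∑ j, ∑ k, F i j k) = ∑ j, ∑ i, ∑ k, F i j k := Finset.sum_comm
      _ = ∑ j, ∑ k, ∑ i, F i j k := Finset.sum_congr rfl fun j _ => Finset.sum_comm
      _ = ∑ k, ∑ j, ∑ i, F i j k := Finset.sum_comm
  have h3 : (∑ i, ∑ j, ∑ k, T (e i) (e j) (e k) * T (e i) (J (e j)) (J (e k))) = S := by
    rw [hS, swap13 (fun i j k => T (e i) (e j) (e k) * T (e i) (J (e j)) (J (e k)))]
    refine Finset.sum_congr rfl fun i _ => Finset.sum_congr rfl fun j _ =>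
      Finset.sum_congr rfl fun k _ => ?_
    have ha : T (e k) (e j) (e i) = -T (e i) (e j) (e k) := by
      rw [halt1 (e k) (e j) (e i), halt2 (e j) (e k) (e i), halt1 (e j) (e i) (e k)]
      ring
    have hb : T (e k) (J (e j)) (J (e i)) = -T (J (e i)) (J (e j)) (e k) := by
      rw [halt1 (e k) (J (e j)) (J (e i)), halt2 (J (e j)) (e k) (J (e i)),
        halt1 (J (e j)) (J (e i)) (e k)]
      ring
    rw [ha, hb]
    ring
  have hexp : ∀ i j k : ι, (T (e i) (e j) (e k)) ^ 2 =
      T (e i) (e j) (e k) * T (J (e i)) (J (e j)) (e k)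
      + T (e i) (e j) (e k) * T (J (e i)) (e j) (J (e k))
      + T (e i) (e j) (e k) * T (e i) (J (e j)) (J (e k)) := fun i j k => by
    linear_combination T (e i) (e j) (e k) * htype (e i) (e j) (e k)
  have hN : (∑ i, ∑ j, ∑ k, (T (e i) (e j) (e k)) ^ 2) = S + S + S := by
    calc (∑ i, ∑ j, ∑ k, (T (e i) (e j) (e k)) ^ 2)
        = ∑ i, ∑ j, ∑ k, (T (e i) (e j) (e k) * T (J (e i)) (J (e j)) (e k)
          + T (e i) (e j) (e k) * T (J (e i)) (e j) (J (e k))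
          + T (e i) (e j) (e k) * T (e i) (J (e j)) (J (e k))) := by
          exact Finset.sum_congr rfl fun i _ => Finset.sum_congr rfl fun j _ =>
            Finset.sum_congr rfl fun k _ => hexp i j k
      _ = S + S + S := by
          simp only [Finset.sum_add_distrib]
          rw [h2, h3]
  rw [hN]
  ring
end

section
/- Let V be a real inner product space of dimension 4n carrying a quaternionic Hermitian structure (J₁,J₂,J₃), and let T be a 3-form on V of type (1,2)+(2,1) with respect to each J_α, α = 1,2,3. Then for every orthonormal basis (e_1,…,e_{4n}) of V and every cyclic permutation (α,β,γ) of (1,2,3): 2·Σ_{i,j,k} T(e_i,e_j,e_k)·T(J_γ e_i, J_β e_j, e_k) = Σ_{i,j,k} T(e_i,e_j,e_k)·( T(J_γ e_i, J_γ e_j, J_α e_k) − T(J_β e_i, J_β e_j, J_α e_k) ). -/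
open scoped RealInnerProductSpace

lemma qkt_aux {V : Type*} [AddCommGroup V] [Module ℝ V]
    (Ja Jb Jc : V →ₗ[ℝ] V) (T : V →ₗ[ℝ] V →ₗ[ℝ] V →ₗ[ℝ] ℝ)
    (halt1 : ∀ x y z : V, T x y z = -T y x z)
    (htyp : ∀ x y z : V, T x y z = T (Ja x) (Ja y) z + T (Ja x) y (Ja z) + T x (Ja y) (Ja z))
    (hac : ∀ x : V, Ja (Jc x) = -(Jb x))
    (hab : ∀ x : V, Ja (Jb x) = Jc x)
    {N : ℕ} (e : Fin N → V) :
    2 * ∑ i, ∑ j, ∑ k, T (e i) (e j) (e k) * T (Jc (e i)) (Jb (e j)) (e k) =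
      ∑ i, ∑ j, ∑ k, T (e i) (e j) (e k) *
        (T (Jc (e i)) (Jc (e j)) (Ja (e k)) - T (Jb (e i)) (Jb (e j)) (Ja (e k))) := by
  have hpoint : ∀ x y z : V,
      T (Jc x) (Jc y) (Ja z) - T (Jb x) (Jb y) (Ja z) =
        T (Jc x) (Jb y) z + T (Jb x) (Jc y) z := by
    intro x y z
    have h := htyp (Jc x) (Jb y) z
    rw [hac, hab] at h
    simp only [map_neg, LinearMap.neg_apply] at h
    linarith
  have hswap : ∑ i, ∑ j, ∑ k, T (e i) (e j) (e k) * T (Jb (e i)) (Jc (e j)) (e k) =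
      ∑ i, ∑ j, ∑ k, T (e i) (e j) (e k) * T (Jc (e i)) (Jb (e j)) (e k) := by
    rw [Finset.sum_comm]
    refine Finset.sum_congr rfl fun j _ => Finset.sum_congr rfl fun i _ =>
      Finset.sum_congr rfl fun k _ => ?_
    rw [halt1 (e i) (e j), halt1 (Jb (e i)) (Jc (e j))]
    ring
  calc 2 * ∑ i, ∑ j, ∑ k, T (e i) (e j) (e k) * T (Jc (e i)) (Jb (e j)) (e k)
      = (∑ i, ∑ j, ∑ k, T (e i) (e j) (e k) * T (Jc (e i)) (Jb (e j)) (e k)) +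
        ∑ i, ∑ j, ∑ k, T (e i) (e j) (e k) * T (Jb (e i)) (Jc (e j)) (e k) := by
        rw [hswap]; ring
    _ = ∑ i, ∑ j, ∑ k, (T (e i) (e j) (e k) * T (Jc (e i)) (Jb (e j)) (e k) +
          T (e i) (e j) (e k) * T (Jb (e i)) (Jc (e j)) (e k)) := by
        simp only [Finset.sum_add_distrib]
    _ = ∑ i, ∑ j, ∑ k, T (e i) (e j) (e k) *
          (T (Jc (e i)) (Jc (e j)) (Ja (e k)) - T (Jb (e i)) (Jb (e j)) (Ja (e k))) := by
        refine Finset.sum_congr rfl fun i _ => Finset.sum_congr rfl fun j _ =>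
          Finset.sum_congr rfl fun k _ => ?_
        rw [hpoint]; ring

/-- On a `4n`-dimensional real inner product space with a quaternionic
Hermitian structure `(J1, J2, J3)` and a 3-form `T` of type (1,2)+(2,1) with respect to each
`Jα`, for every orthonormal basis and every cyclic permutation `(Ja, Jb, Jc)` of
`(J1, J2, J3)`:
`2 ∑ T(eᵢ,eⱼ,eₖ)·T(Jc eᵢ, Jb eⱼ, eₖ) = ∑ T(eᵢ,eⱼ,eₖ)·(T(Jc eᵢ, Jc eⱼ, Ja eₖ) − T(Jb eᵢ, Jb eⱼ, Ja eₖ))`. -/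
theorem qkt_lemma_first_identity
    {V : Type*} [NormedAddCommGroup V] [InnerProductSpace ℝ V] [FiniteDimensional ℝ V]
    (n : ℕ) (hdim : Module.finrank ℝ V = 4 * n)
    (J1 J2 J3 : V →ₗ[ℝ] V)
    (horth : ∀ J ∈ ({J1, J2, J3} : Set (V →ₗ[ℝ] V)), ∀ x y : V, ⟪J x, J y⟫ = ⟪x, y⟫)
    (hsq : ∀ J ∈ ({J1, J2, J3} : Set (V →ₗ[ℝ] V)), ∀ x : V, J (J x) = -x)
    (h12 : ∀ x : V, J1 (J2 x) = J3 x)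
    (h21 : ∀ x : V, J2 (J1 x) = -J3 x)
    (T : V →ₗ[ℝ] V →ₗ[ℝ] V →ₗ[ℝ] ℝ)
    (halt1 : ∀ x y z : V, T x y z = -T y x z)
    (halt2 : ∀ x y z : V, T x y z = -T x z y)
    (htype : ∀ J ∈ ({J1, J2, J3} : Set (V →ₗ[ℝ] V)), ∀ x y z : V,
      T x y z = T (J x) (J y) z + T (J x) y (J z) + T x (J y) (J z))
    (e : OrthonormalBasis (Fin (4 * n)) ℝ V) :
    ∀ Ja Jb Jc : V →ₗ[ℝ] V,
      ((Ja, Jb, Jc) = (J1, J2, J3) ∨ (Ja, Jb, Jc) = (J2, J3, J1) ∨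
        (Ja, Jb, Jc) = (J3, J1, J2)) →
      2 * ∑ i, ∑ j, ∑ k, T (e i) (e j) (e k) * T (Jc (e i)) (Jb (e j)) (e k) =
        ∑ i, ∑ j, ∑ k, T (e i) (e j) (e k) *
          (T (Jc (e i)) (Jc (e j)) (Ja (e k)) - T (Jb (e i)) (Jb (e j)) (Ja (e k))) := by
  have hm1 : J1 ∈ ({J1, J2, J3} : Set (V →ₗ[ℝ] V)) := by simp
  have hm2 : J2 ∈ ({J1, J2, J3} : Set (V →ₗ[ℝ] V)) := by simp
  have hm3 : J3 ∈ ({J1, J2, J3} : Set (V →ₗ[ℝ] V)) := by simp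
  have hsq1 := hsq J1 hm1
  have hsq2 := hsq J2 hm2
  -- multiplication table
  have h32 : ∀ x : V, J3 (J2 x) = -(J1 x) := by
    intro x
    have h := h12 (J2 x)
    rw [hsq2 x, map_neg] at h
    exact h.symm
  have h23 : ∀ x : V, J2 (J3 x) = J1 x := by
    intro x
    have h := h21 (J2 x)
    rw [h12 x, h32 x] at h
    simpa using h
  have h13 : ∀ x : V, J1 (J3 x) = -(J2 x) := by
    intro x
    have h := hsq1 (J2 x)
    rw [h12 x] at h
    exact h
  have h31 : ∀ x : V, J3 (J1 x) = J2 x := by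
    intro x
    have h := h12 (J1 x)
    rw [h21 x, map_neg, h13 x] at h
    simpa using h.symm
  rintro Ja Jb Jc (h | h | h) <;>
    (simp only [Prod.mk.injEq] at h; obtain ⟨rfl, rfl, rfl⟩ := h)
  · exact qkt_aux _ _ _ T halt1 (htype _ hm1) h13 h12 e
  · exact qkt_aux _ _ _ T halt1 (htype _ hm2) h21 h23 e
  · exact qkt_aux _ _ _ T halt1 (htype _ hm3) h32 h31 e
end

section
/- Let V be a finite-dimensional real inner product space, J an orthogonal endomorphism of V with J² = −id, and T a 3-form on V of type (1,2)+(2,1) with respect to J. Fix an orthonormal basis (e_i) of V and define the bilinear form B(X,Y) = Σ_{i,j} T(X, e_i, e_j) · T(JY, J e_i, e_j). Then 2·B(X,Y) = Σ_{i,j} ( T(X,e_i,e_j)·T(Y,e_i,e_j) − T(X,e_i,e_j)·T(Y, J e_i, J e_j) ) for all X,Y ∈ V; in particular B is symmetric, i.e. B(X,Y) = B(Y,X). -/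
/-!
Expanding `T Y eᵢ eⱼ` by the type condition splits `P(X,Y) = ∑ T(X,eᵢ,eⱼ)·T(Y,eᵢ,eⱼ)` into three
sums: the first is `B(X,Y)`, the second becomes `B(X,Y)` after exchanging `i` and `j`, and the third is
`C(X,Y) = ∑ T(X,eᵢ,eⱼ)·T(Y,Jeᵢ,Jeⱼ)`. Since `J` is skew-adjoint, moving it across both basis
slots shows that `C` is symmetric; `P` is symmetric too, hence so is `B = (P - C)/2`.
-/

open scoped RealInnerProductSpace

namespace OrthonormalBasis

variable {V : Type*} [NormedAddCommGroup V] [InnerProductSpace ℝ V]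
  {ι : Type*} [Fintype ι] (e : OrthonormalBasis ι ℝ V)

theorem apply_eq_inner_sum_smul (f : V →ₗ[ℝ] ℝ) (x : V) :
    f x = ⟪∑ i, f (e i) • e i, x⟫ := by
  conv_lhs => rw [← e.sum_repr' x]
  simp only [map_sum, map_smul, smul_eq_mul, sum_inner, real_inner_smul_left, mul_comm]

theorem sum_apply_mul_apply (f g : V →ₗ[ℝ] ℝ) :
    ∑ i, f (e i) * g (e i) = g (∑ i, f (e i) • e i) := by
  simp only [map_sum, map_smul, smul_eq_mul]

theorem sum_apply_mul_apply_map {A A' : V →ₗ[ℝ] V} (hA : ∀ x y, ⟪A x, y⟫ = ⟪x, A' y⟫)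
    (f g : V →ₗ[ℝ] ℝ) :
    ∑ i, f (e i) * g (A (e i)) = ∑ i, f (A' (e i)) * g (e i) := by
  have hg := e.sum_apply_mul_apply f (g ∘ₗ A)
  have hf := e.sum_apply_mul_apply g (f ∘ₗ A')
  simp only [LinearMap.comp_apply] at hg hf
  rw [hg, Finset.sum_congr rfl fun i _ => mul_comm _ _, hf, e.apply_eq_inner_sum_smul g,
    e.apply_eq_inner_sum_smul f, real_inner_comm, hA]

theorem sum_sum_apply_mul_apply_map_map {A A' : V →ₗ[ℝ] V}
    (hA : ∀ x y, ⟪A x, y⟫ = ⟪x, A' y⟫) (S R : V →ₗ[ℝ] V →ₗ[ℝ] ℝ) :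
    ∑ i, ∑ j, S (e i) (e j) * R (A (e i)) (A (e j)) =
      ∑ i, ∑ j, S (A' (e i)) (A' (e j)) * R (e i) (e j) := calc
  _ = ∑ i, ∑ j, S (e i) (A' (e j)) * R (A (e i)) (e j) :=
      Finset.sum_congr rfl fun i _ => e.sum_apply_mul_apply_map hA (S (e i)) (R (A (e i)))
  _ = ∑ j, ∑ i, S (e i) (A' (e j)) * R (A (e i)) (e j) := Finset.sum_comm
  _ = ∑ j, ∑ i, S (A' (e i)) (A' (e j)) * R (e i) (e j) :=
      Finset.sum_congr rfl fun j _ =>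
        e.sum_apply_mul_apply_map hA (S.flip (A' (e j))) (R.flip (e j))
  _ = _ := Finset.sum_comm

end OrthonormalBasis

theorem inner_apply_eq_inner_neg_apply {V : Type*} [NormedAddCommGroup V]
    [InnerProductSpace ℝ V] {J : V →ₗ[ℝ] V} (horth : ∀ x y : V, ⟪J x, J y⟫ = ⟪x, y⟫)
    (hsq : ∀ x : V, J (J x) = -x) (x y : V) :
    ⟪J x, y⟫ = ⟪x, (-J) y⟫ := by
  rw [LinearMap.neg_apply, inner_neg_right, ← horth, hsq, inner_neg_left]

theorem three_form_B_symmetric_general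
    {V : Type*} [NormedAddCommGroup V] [InnerProductSpace ℝ V]
    (J : V →ₗ[ℝ] V)
    (horth : ∀ x y : V, ⟪J x, J y⟫ = ⟪x, y⟫)
    (hsq : ∀ x : V, J (J x) = -x)
    (T : V →ₗ[ℝ] V →ₗ[ℝ] V →ₗ[ℝ] ℝ)
    (halt2 : ∀ x y z : V, T x y z = -T x z y)
    (htype : ∀ x y z : V,
      T x y z = T (J x) (J y) z + T (J x) y (J z) + T x (J y) (J z))
    {ι : Type*} [Fintype ι] (e : OrthonormalBasis ι ℝ V)
    (B : V → V → ℝ)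
    (hB : ∀ X Y : V, B X Y = ∑ i, ∑ j, T X (e i) (e j) * T (J Y) (J (e i)) (e j)) :
    ∀ X Y : V,
      (2 * B X Y =
        ∑ i, ∑ j, (T X (e i) (e j) * T Y (e i) (e j) -
          T X (e i) (e j) * T Y (J (e i)) (J (e j)))) ∧
      B X Y = B Y X := by
  set C : V → V → ℝ := fun X Y => ∑ i, ∑ j, T X (e i) (e j) * T Y (J (e i)) (J (e j))
  have hB_swap X Y : ∑ i, ∑ j, T X (e i) (e j) * T (J Y) (e i) (J (e j)) = B X Y := by
    rw [hB, Finset.sum_comm]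
    refine Finset.sum_congr rfl fun i _ => Finset.sum_congr rfl fun j _ => ?_
    rw [halt2 (J Y) (e j), halt2 X (e j)]
    ring
  have h_split X Y : ∑ i, ∑ j, T X (e i) (e j) * T Y (e i) (e j) = 2 * B X Y + C X Y := by
    have h_expand i j : T X (e i) (e j) * T Y (e i) (e j) =
        T X (e i) (e j) * T (J Y) (J (e i)) (e j) + T X (e i) (e j) * T (J Y) (e i) (J (e j)) +
          T X (e i) (e j) * T Y (J (e i)) (J (e j)) := by
      rw [htype Y, mul_add, mul_add]
    simp only [h_expand, Finset.sum_add_distrib, ← hB, hB_swap, C]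
    ring
  have hC_symm X Y : C X Y = C Y X := by
    simp only [C]
    rw [e.sum_sum_apply_mul_apply_map_map (inner_apply_eq_inner_neg_apply horth hsq)]
    simp only [LinearMap.neg_apply, map_neg, neg_neg, mul_comm]
  intro X Y
  have hXY := h_split X Y
  have hYX := h_split Y X
  simp only [Finset.sum_sub_distrib, mul_comm (T Y _ _)] at hXY hYX ⊢
  constructor <;> linarith [hC_symm X Y]

/-- Let `V` be a finite-dimensional real inner product space, `J` an
orthogonal complex structure on `V`, and `T` a 3-form of type (1,2)+(2,1) with respect to
`J`. For an orthonormal basis `(e i)` set `B(X,Y) = ∑_{i,j} T(X,eᵢ,eⱼ)·T(JY,Jeᵢ,eⱼ)`. Then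
`2·B(X,Y) = ∑_{i,j} (T(X,eᵢ,eⱼ)·T(Y,eᵢ,eⱼ) − T(X,eᵢ,eⱼ)·T(Y,Jeᵢ,Jeⱼ))`, and in particular
`B` is symmetric. -/
theorem three_form_B_symmetric
    {V : Type*} [NormedAddCommGroup V] [InnerProductSpace ℝ V] [FiniteDimensional ℝ V]
    (J : V →ₗ[ℝ] V)
    (horth : ∀ x y : V, ⟪J x, J y⟫ = ⟪x, y⟫)
    (hsq : ∀ x : V, J (J x) = -x)
    (T : V →ₗ[ℝ] V →ₗ[ℝ] V →ₗ[ℝ] ℝ)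
    (halt1 : ∀ x y z : V, T x y z = -T y x z)
    (halt2 : ∀ x y z : V, T x y z = -T x z y)
    (htype : ∀ x y z : V,
      T x y z = T (J x) (J y) z + T (J x) y (J z) + T x (J y) (J z))
    {ι : Type*} [Fintype ι] (e : OrthonormalBasis ι ℝ V)
    (B : V → V → ℝ)
    (hB : ∀ X Y : V, B X Y = ∑ i, ∑ j, T X (e i) (e j) * T (J Y) (J (e i)) (e j)) :
    ∀ X Y : V,
      (2 * B X Y =
        ∑ i, ∑ j, (T X (e i) (e j) * T Y (e i) (e j) -
          T X (e i) (e j) * T Y (J (e i)) (J (e j)))) ∧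
      B X Y = B Y X :=
  three_form_B_symmetric_general J horth hsq T halt2 htype e B hB
end

section
/- Let V be a real inner product space of dimension 4n carrying a quaternionic Hermitian structure (J₁,J₂,J₃), and let T be a 3-form on V of type (1,2)+(2,1) with respect to each J_α, α = 1,2,3. Then for every orthonormal basis (e_1,…,e_{4n}) of V and every X ∈ V, the value t_α(X) := (1/2)·Σ_{i=1}^{4n} T(J_α X, e_i, J_α e_i) is independent of α; that is, t_1(X) = t_2(X) = t_3(X). -/
open scoped RealInnerProductSpace

/-- Trace of a bilinear form is independent of the orthonormal basis used. -/
private lemma qkt_trace_indep {V : Type*} [NormedAddCommGroup V] [InnerProductSpace ℝ V]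
    {m : ℕ} (B : V →ₗ[ℝ] V →ₗ[ℝ] ℝ) (e f : OrthonormalBasis (Fin m) ℝ V) :
    ∑ i, B (f i) (f i) = ∑ i, B (e i) (e i) := by
  have expand : ∀ i, B (f i) (f i)
      = ∑ j, ∑ k, ⟪e j, f i⟫ * ⟪e k, f i⟫ * B (e j) (e k) := by
    intro i
    conv_lhs => rw [← e.sum_repr' (f i)]
    simp [map_sum, LinearMap.sum_apply, map_smul, LinearMap.smul_apply, smul_eq_mul,
      Finset.mul_sum, mul_assoc]
    rw [Finset.sum_comm]
    exact Finset.sum_congr rfl fun j _ => Finset.sum_congr rfl fun k _ => by ring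
  calc ∑ i, B (f i) (f i)
      = ∑ i, ∑ j, ∑ k, ⟪e j, f i⟫ * ⟪e k, f i⟫ * B (e j) (e k) :=
        Finset.sum_congr rfl fun i _ => expand i
    _ = ∑ j, ∑ k, (∑ i, ⟪e j, f i⟫ * ⟪e k, f i⟫) * B (e j) (e k) := by
        rw [Finset.sum_comm]
        refine Finset.sum_congr rfl fun j _ => ?_
        rw [Finset.sum_comm]
        refine Finset.sum_congr rfl fun k _ => ?_
        rw [Finset.sum_mul]
    _ = ∑ j, ∑ k, ⟪e j, e k⟫ * B (e j) (e k) := by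
        refine Finset.sum_congr rfl fun j _ => Finset.sum_congr rfl fun k _ => ?_
        congr 1
        have h := f.sum_inner_mul_inner (e j) (e k)
        calc ∑ i, ⟪e j, f i⟫ * ⟪e k, f i⟫
            = ∑ i, ⟪e j, f i⟫ * ⟪f i, e k⟫ := by
              refine Finset.sum_congr rfl fun i _ => ?_
              rw [real_inner_comm (e k) (f i)]
          _ = ⟪e j, e k⟫ := h
    _ = ∑ j, B (e j) (e j) := by
        refine Finset.sum_congr rfl fun j _ => ?_
        simp [orthonormal_iff_ite.mp e.orthonormal]

/-- Change of orthonormal basis by an orthogonal complex structure `J`. -/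
private lemma qkt_change {V : Type*} [NormedAddCommGroup V] [InnerProductSpace ℝ V]
    {m : ℕ} (e : OrthonormalBasis (Fin m) ℝ V)
    (T : V →ₗ[ℝ] V →ₗ[ℝ] V →ₗ[ℝ] ℝ) (u : V)
    (J A : V →ₗ[ℝ] V) (horth : ∀ x y : V, ⟪J x, J y⟫ = ⟪x, y⟫)
    (hsq : ∀ x : V, J (J x) = -x) :
    ∑ i, T u (J (e i)) (A (J (e i))) = ∑ i, T u (e i) (A (e i)) := by
  let Jeq : V ≃ₗ[ℝ] V := LinearEquiv.ofLinear J (-J)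
    (by ext x; simp [hsq x]) (by ext x; simp [hsq x])
  have hco : ∀ x : V, Jeq x = J x := fun x => rfl
  let iso : V ≃ₗᵢ[ℝ] V := Jeq.isometryOfInner (fun x y => by rw [hco, hco]; exact horth x y)
  let f : OrthonormalBasis (Fin m) ℝ V := e.map iso
  have hf : ∀ i, f i = J (e i) := fun i => by
    simp only [f, OrthonormalBasis.map_apply]
    rfl
  have := qkt_trace_indep ((T u).compl₂ A) e f
  simpa only [LinearMap.compl₂_apply, hf] using this

/-- On a `4n`-dimensional real inner product space with a quaternionic
Hermitian structure `(J1, J2, J3)` and a 3-form `T` of type (1,2)+(2,1) with respect to each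
`Jα`, the torsion 1-form `t_α(X) = (1/2) ∑ᵢ T(Jα X, eᵢ, Jα eᵢ)` does not depend on `α`. -/
theorem qkt_torsion_one_form_independent
    {V : Type*} [NormedAddCommGroup V] [InnerProductSpace ℝ V] [FiniteDimensional ℝ V]
    (n : ℕ) (hdim : Module.finrank ℝ V = 4 * n)
    (J1 J2 J3 : V →ₗ[ℝ] V)
    (horth : ∀ J ∈ ({J1, J2, J3} : Set (V →ₗ[ℝ] V)), ∀ x y : V, ⟪J x, J y⟫ = ⟪x, y⟫)
    (hsq : ∀ J ∈ ({J1, J2, J3} : Set (V →ₗ[ℝ] V)), ∀ x : V, J (J x) = -x)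
    (h12 : ∀ x : V, J1 (J2 x) = J3 x)
    (h21 : ∀ x : V, J2 (J1 x) = -J3 x)
    (T : V →ₗ[ℝ] V →ₗ[ℝ] V →ₗ[ℝ] ℝ)
    (halt1 : ∀ x y z : V, T x y z = -T y x z)
    (halt2 : ∀ x y z : V, T x y z = -T x z y)
    (htype : ∀ J ∈ ({J1, J2, J3} : Set (V →ₗ[ℝ] V)), ∀ x y z : V,
      T x y z = T (J x) (J y) z + T (J x) y (J z) + T x (J y) (J z))
    (e : OrthonormalBasis (Fin (4 * n)) ℝ V) :
    ∀ X : V,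
      (1 / 2) * ∑ i, T (J1 X) (e i) (J1 (e i)) = (1 / 2) * ∑ i, T (J2 X) (e i) (J2 (e i)) ∧
      (1 / 2) * ∑ i, T (J2 X) (e i) (J2 (e i)) = (1 / 2) * ∑ i, T (J3 X) (e i) (J3 (e i)) := by
  intro X
  have m1 : J1 ∈ ({J1, J2, J3} : Set (V →ₗ[ℝ] V)) := Set.mem_insert _ _
  have m2 : J2 ∈ ({J1, J2, J3} : Set (V →ₗ[ℝ] V)) :=
    Set.mem_insert_of_mem _ (Set.mem_insert _ _)
  have m3 : J3 ∈ ({J1, J2, J3} : Set (V →ₗ[ℝ] V)) :=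
    Set.mem_insert_of_mem _ (Set.mem_insert_of_mem _ rfl)
  have o2 := horth J2 m2
  have o3 := horth J3 m3
  have s1 := hsq J1 m1
  have s2 := hsq J2 m2
  have s3 := hsq J3 m3
  -- quaternion relations
  have h32 : ∀ x : V, J3 (J2 x) = -J1 x := by
    intro x
    rw [← h12 (J2 x), s2 x, map_neg]
  have h13 : ∀ x : V, J1 (J3 x) = -J2 x := by
    intro x
    rw [← h12 x, s1 (J2 x)]
  have h23 : ∀ x : V, J2 (J3 x) = J1 x := by
    intro x
    rw [← h12 x, h21 (J2 x), h32 x, neg_neg]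
  -- cross-sum reductions via change of basis
  have c1 : ∀ u : V, ∑ i, T u (J2 (e i)) (J1 (e i)) = -∑ i, T u (e i) (J3 (e i)) := by
    intro u
    have step : ∑ i, T u (J2 (e i)) ((-J3) (J2 (e i))) = ∑ i, T u (e i) ((-J3) (e i)) :=
      qkt_change e T u J2 (-J3) o2 s2
    have l : ∀ i, (-J3) (J2 (e i)) = J1 (e i) := fun i => by
      simp [LinearMap.neg_apply, h32]
    calc ∑ i, T u (J2 (e i)) (J1 (e i))
        = ∑ i, T u (J2 (e i)) ((-J3) (J2 (e i))) := by
          exact Finset.sum_congr rfl fun i _ => by rw [l i]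
      _ = ∑ i, T u (e i) ((-J3) (e i)) := step
      _ = -∑ i, T u (e i) (J3 (e i)) := by
          simp [LinearMap.neg_apply]
  have c2 : ∀ u : V, ∑ i, T u (J2 (e i)) (J3 (e i)) = ∑ i, T u (e i) (J1 (e i)) := by
    intro u
    have step : ∑ i, T u (J2 (e i)) (J1 (J2 (e i))) = ∑ i, T u (e i) (J1 (e i)) :=
      qkt_change e T u J2 J1 o2 s2
    calc ∑ i, T u (J2 (e i)) (J3 (e i))
        = ∑ i, T u (J2 (e i)) (J1 (J2 (e i))) :=
          Finset.sum_congr rfl fun i _ => by rw [h12]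
      _ = ∑ i, T u (e i) (J1 (e i)) := step
  have c3 : ∀ u : V, ∑ i, T u (J3 (e i)) (J2 (e i)) = -∑ i, T u (e i) (J1 (e i)) := by
    intro u
    have step : ∑ i, T u (J3 (e i)) ((-J1) (J3 (e i))) = ∑ i, T u (e i) ((-J1) (e i)) :=
      qkt_change e T u J3 (-J1) o3 s3
    have l : ∀ i, (-J1) (J3 (e i)) = J2 (e i) := fun i => by
      simp [LinearMap.neg_apply, h13]
    calc ∑ i, T u (J3 (e i)) (J2 (e i))
        = ∑ i, T u (J3 (e i)) ((-J1) (J3 (e i))) :=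
          Finset.sum_congr rfl fun i _ => by rw [l i]
      _ = ∑ i, T u (e i) ((-J1) (e i)) := step
      _ = -∑ i, T u (e i) (J1 (e i)) := by
          simp [LinearMap.neg_apply]
  have c4 : ∀ u : V, ∑ i, T u (J3 (e i)) (J1 (e i)) = ∑ i, T u (e i) (J2 (e i)) := by
    intro u
    have step : ∑ i, T u (J3 (e i)) (J2 (J3 (e i))) = ∑ i, T u (e i) (J2 (e i)) :=
      qkt_change e T u J3 J2 o3 s3
    calc ∑ i, T u (J3 (e i)) (J1 (e i))
        = ∑ i, T u (J3 (e i)) (J2 (J3 (e i))) :=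
          Finset.sum_congr rfl fun i _ => by rw [h23]
      _ = ∑ i, T u (e i) (J2 (e i)) := step
  -- key identity 1 : a1 = a3, from the type condition w.r.t. J2
  have key1 : ∑ i, T (J1 X) (e i) (J1 (e i)) = ∑ i, T (J3 X) (e i) (J3 (e i)) := by
    have hsum : ∑ i, T (J1 X) (e i) (J1 (e i))
        = -(∑ i, T (J3 X) (J2 (e i)) (J1 (e i)))
          + (∑ i, T (J3 X) (e i) (J3 (e i)))
          - (∑ i, T (J1 X) (J2 (e i)) (J3 (e i))) := by
      rw [← Finset.sum_neg_distrib, ← Finset.sum_add_distrib, ← Finset.sum_sub_distrib]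
      refine Finset.sum_congr rfl fun i _ => ?_
      have h := htype J2 m2 (J1 X) (e i) (J1 (e i))
      simp only [h21, map_neg, LinearMap.neg_apply, neg_neg] at h
      linarith
    have hc1 := c1 (J3 X)
    have hc2 := c2 (J1 X)
    linarith
  -- key identity 2 : a2 = a1, from the type condition w.r.t. J3
  have key2 : ∑ i, T (J2 X) (e i) (J2 (e i)) = ∑ i, T (J1 X) (e i) (J1 (e i)) := by
    have hsum : ∑ i, T (J2 X) (e i) (J2 (e i))
        = -(∑ i, T (J1 X) (J3 (e i)) (J2 (e i)))
          + (∑ i, T (J1 X) (e i) (J1 (e i)))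
          - (∑ i, T (J2 X) (J3 (e i)) (J1 (e i))) := by
      rw [← Finset.sum_neg_distrib, ← Finset.sum_add_distrib, ← Finset.sum_sub_distrib]
      refine Finset.sum_congr rfl fun i _ => ?_
      have h := htype J3 m3 (J2 X) (e i) (J2 (e i))
      simp only [h32, map_neg, LinearMap.neg_apply, neg_neg] at h
      linarith
    have hc3 := c3 (J1 X)
    have hc4 := c4 (J2 X)
    linarith
  constructor
  · rw [key2]
  · rw [key2, key1]
end

section
/- Let V be a real inner product space of dimension 4n (n ≥ 1) carrying a quaternionic Hermitian structure (J₁,J₂,J₃), and let A be a skew-adjoint endomorphism of V lying in sp(n) ⊕ sp(1), i.e. A = A'' + a₁J₁ + a₂J₂ + a₃J₃ with A'' skew-adjoint and commuting with each J_α. For an orthonormal basis (e_i) define ρ_α := (1/2)·Σ_{i=1}^{4n} ⟨A e_i, J_α e_i⟩. Then for every cyclic permutation (α,β,γ) of (1,2,3): n·[A, J_α] = ρ_γ·J_β − ρ_β·J_γ, where [A, J_α] = A∘J_α − J_α∘A. -/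
open scoped RealInnerProductSpace

lemma trace_eq_sum_inner' {V : Type*} [NormedAddCommGroup V] [InnerProductSpace ℝ V]
    [FiniteDimensional ℝ V] {ι : Type*} [Fintype ι] [DecidableEq ι]
    (e : OrthonormalBasis ι ℝ V) (f : V →ₗ[ℝ] V) :
    LinearMap.trace ℝ V f = ∑ i, ⟪e i, f (e i)⟫ := by
  rw [LinearMap.trace_eq_matrix_trace ℝ e.toBasis f, Matrix.trace]
  simp [Matrix.diag, LinearMap.toMatrix_apply, OrthonormalBasis.coe_toBasis,
    OrthonormalBasis.coe_toBasis_repr_apply, e.repr_apply_apply, real_inner_comm]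

section key
variable {V : Type*} [NormedAddCommGroup V] [InnerProductSpace ℝ V] [FiniteDimensional ℝ V]

omit [FiniteDimensional ℝ V] in
lemma inner_J_self {J : V →ₗ[ℝ] V} (ho : ∀ x y : V, ⟪J x, J y⟫ = ⟪x, y⟫)
    (hs : ∀ x : V, J (J x) = -x) (x : V) : ⟪J x, x⟫ = 0 := by
  have h : ⟪J x, x⟫ = -⟪J x, x⟫ := by
    conv_lhs => rw [← ho (J x) x, hs x, inner_neg_left, real_inner_comm]
  linarith

lemma sum_inner_App_J {ι : Type*} [Fintype ι] [DecidableEq ι] (e : OrthonormalBasis ι ℝ V)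
    (A'' Ja Jb : V →ₗ[ℝ] V)
    (hskew : ∀ x y : V, ⟪A'' x, y⟫ = -⟪x, A'' y⟫)
    (hca : ∀ x : V, A'' (Ja x) = Ja (A'' x))
    (hsa : ∀ x : V, Ja (Ja x) = -x)
    (hconj : ∀ x : V, Ja (Jb (Ja x)) = Jb x) :
    ∑ i, ⟪A'' (e i), Jb (e i)⟫ = 0 := by
  have hst : ∑ i, ⟪A'' (e i), Jb (e i)⟫ = -(LinearMap.trace ℝ V (A'' ∘ₗ Jb)) := by
    rw [trace_eq_sum_inner' e, ← Finset.sum_neg_distrib]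
    refine Finset.sum_congr rfl fun i _ => ?_
    rw [LinearMap.comp_apply, ← hskew, real_inner_comm]
  have key : (Ja ∘ₗ (A'' ∘ₗ Jb)) ∘ₗ Ja = A'' ∘ₗ Jb := by
    ext x
    simp only [LinearMap.comp_apply]
    rw [← hca, hconj]
  have h2 : LinearMap.trace ℝ V (A'' ∘ₗ Jb) = -(LinearMap.trace ℝ V (A'' ∘ₗ Jb)) := by
    conv_lhs => rw [← key]
    rw [show (Ja ∘ₗ (A'' ∘ₗ Jb)) ∘ₗ Ja = (Ja ∘ₗ (A'' ∘ₗ Jb)) * Ja from rfl,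
      LinearMap.trace_mul_comm]
    have : Ja * (Ja ∘ₗ (A'' ∘ₗ Jb)) = -(A'' ∘ₗ Jb) := by
      ext x; simp only [Module.End.mul_apply, LinearMap.comp_apply, LinearMap.neg_apply]
      rw [hsa]
    rw [this, map_neg]
  have h3 : LinearMap.trace ℝ V (A'' ∘ₗ Jb) = 0 := by linarith
  rw [hst, h3, neg_zero]

lemma key_lemma (n : ℕ)
    (Ja Jb Jc : V →ₗ[ℝ] V)
    (hoa : ∀ x y : V, ⟪Ja x, Ja y⟫ = ⟪x, y⟫)
    (hob : ∀ x y : V, ⟪Jb x, Jb y⟫ = ⟪x, y⟫)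
    (hoc : ∀ x y : V, ⟪Jc x, Jc y⟫ = ⟪x, y⟫)
    (hsa : ∀ x : V, Ja (Ja x) = -x)
    (hsb : ∀ x : V, Jb (Jb x) = -x)
    (hsc : ∀ x : V, Jc (Jc x) = -x)
    (hab : ∀ x : V, Ja (Jb x) = Jc x)
    (hbc : ∀ x : V, Jb (Jc x) = Ja x)
    (hca2 : ∀ x : V, Jc (Ja x) = Jb x)
    (hba : ∀ x : V, Jb (Ja x) = -Jc x)
    (hcb : ∀ x : V, Jc (Jb x) = -Ja x)
    (hac : ∀ x : V, Ja (Jc x) = -Jb x)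
    (e : OrthonormalBasis (Fin (4 * n)) ℝ V)
    (A A'' : V →ₗ[ℝ] V) (aa ab ac : ℝ)
    (hskew : ∀ x y : V, ⟪A'' x, y⟫ = -⟪x, A'' y⟫)
    (hcA : ∀ x : V, A'' (Ja x) = Ja (A'' x))
    (hcB : ∀ x : V, A'' (Jb x) = Jb (A'' x))
    (hcC : ∀ x : V, A'' (Jc x) = Jc (A'' x))
    (hApt : ∀ x : V, A x = A'' x + aa • Ja x + ab • Jb x + ac • Jc x) :
    (n : ℝ) • (A ∘ₗ Ja - Ja ∘ₗ A) =
      ((1 / 2) * ∑ i, ⟪A (e i), Jc (e i)⟫) • Jb -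
      ((1 / 2) * ∑ i, ⟪A (e i), Jb (e i)⟫) • Jc := by
  -- the two sums
  have hnorm : ∀ i, ⟪e i, e i⟫ = (1 : ℝ) := fun i => by
    simp [real_inner_self_eq_norm_mul_norm, e.orthonormal.1 i]
  have hJbJb : ∀ (J : V →ₗ[ℝ] V), (∀ x y : V, ⟪J x, J y⟫ = ⟪x, y⟫) →
      ∑ i, ⟪J (e i), J (e i)⟫ = (4 * n : ℝ) := fun J hJ => by
    simp only [hJ, hnorm]
    simp
  have sumb : ∑ i, ⟪A (e i), Jb (e i)⟫ = 4 * n * ab := by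
    have expand : ∀ i, ⟪A (e i), Jb (e i)⟫ = ⟪A'' (e i), Jb (e i)⟫
        + aa * ⟪Ja (e i), Jb (e i)⟫ + ab * ⟪Jb (e i), Jb (e i)⟫
        + ac * ⟪Jc (e i), Jb (e i)⟫ := fun i => by
      rw [hApt]
      simp [inner_add_left, inner_smul_left, real_inner_smul_left]
    have t1 : ∑ i, ⟪A'' (e i), Jb (e i)⟫ = 0 :=
      sum_inner_App_J e A'' Ja Jb hskew hcA hsa (fun x => by rw [hba, map_neg, hac, neg_neg])
    have t2 : ∀ x : V, ⟪Ja x, Jb x⟫ = 0 := fun x => by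
      rw [← hob (Ja x) (Jb x), hba, hsb, inner_neg_left, inner_neg_right, neg_neg]
      exact inner_J_self hoc hsc x
    have t3 : ∀ x : V, ⟪Jc x, Jb x⟫ = 0 := fun x => by
      rw [← hob (Jc x) (Jb x), hbc, hsb, inner_neg_right]
      rw [inner_J_self hoa hsa x, neg_zero]
    simp only [expand, Finset.sum_add_distrib, t1, ← Finset.mul_sum, hJbJb Jb hob]
    rw [show (∑ i, ⟪Ja (e i), Jb (e i)⟫ : ℝ) = 0 by simp [t2],
        show (∑ i, ⟪Jc (e i), Jb (e i)⟫ : ℝ) = 0 by simp [t3]]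
    ring
  have sumc : ∑ i, ⟪A (e i), Jc (e i)⟫ = 4 * n * ac := by
    have expand : ∀ i, ⟪A (e i), Jc (e i)⟫ = ⟪A'' (e i), Jc (e i)⟫
        + aa * ⟪Ja (e i), Jc (e i)⟫ + ab * ⟪Jb (e i), Jc (e i)⟫
        + ac * ⟪Jc (e i), Jc (e i)⟫ := fun i => by
      rw [hApt]
      simp [inner_add_left, inner_smul_left, real_inner_smul_left]
    have t1 : ∑ i, ⟪A'' (e i), Jc (e i)⟫ = 0 :=
      sum_inner_App_J e A'' Ja Jc hskew hcA hsa (fun x => by rw [hca2, hab])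
    have t2 : ∀ x : V, ⟪Ja x, Jc x⟫ = 0 := fun x => by
      rw [← hoc (Ja x) (Jc x), hca2, hsc, inner_neg_right]
      rw [inner_J_self hob hsb x, neg_zero]
    have t3 : ∀ x : V, ⟪Jb x, Jc x⟫ = 0 := fun x => by
      rw [← hoc (Jb x) (Jc x), hcb, hsc, inner_neg_left, inner_neg_right, neg_neg]
      exact inner_J_self hoa hsa x
    simp only [expand, Finset.sum_add_distrib, t1, ← Finset.mul_sum, hJbJb Jc hoc]
    rw [show (∑ i, ⟪Ja (e i), Jc (e i)⟫ : ℝ) = 0 by simp [t2],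
        show (∑ i, ⟪Jb (e i), Jc (e i)⟫ : ℝ) = 0 by simp [t3]]
    ring
  rw [sumb, sumc]
  ext x
  simp only [LinearMap.smul_apply, LinearMap.sub_apply, LinearMap.comp_apply]
  rw [hApt (Ja x), hApt x]
  simp only [map_add, map_smul, hsa, hba, hbc, hab, hca2, hcb, hac, hcA, smul_neg]
  module
end key

open scoped RealInnerProductSpace in
/-- Let `A = A'' + a₁J₁ + a₂J₂ + a₃J₃` be a skew-adjoint endomorphism in
`sp(n) ⊕ sp(1)` of a `4n`-dimensional quaternionic Hermitian inner product space, and set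
`ρ_α = (1/2) ∑ᵢ ⟪A eᵢ, J_α eᵢ⟫`.  Then for every cyclic permutation `(Ja, Jb, Jc)` of
`(J1, J2, J3)`: `n·[A, Ja] = ρ_c·Jb − ρ_b·Jc`. -/
theorem sp_n_sp_one_commutator_formula
    {V : Type*} [NormedAddCommGroup V] [InnerProductSpace ℝ V] [FiniteDimensional ℝ V]
    (n : ℕ) (hn : 1 ≤ n) (hdim : Module.finrank ℝ V = 4 * n)
    (J1 J2 J3 : V →ₗ[ℝ] V)
    (horth : ∀ J ∈ ({J1, J2, J3} : Set (V →ₗ[ℝ] V)), ∀ x y : V, ⟪J x, J y⟫ = ⟪x, y⟫)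
    (hsq : ∀ J ∈ ({J1, J2, J3} : Set (V →ₗ[ℝ] V)), ∀ x : V, J (J x) = -x)
    (h12 : ∀ x : V, J1 (J2 x) = J3 x)
    (h21 : ∀ x : V, J2 (J1 x) = -J3 x)
    (e : OrthonormalBasis (Fin (4 * n)) ℝ V)
    (A A'' : V →ₗ[ℝ] V) (a1 a2 a3 : ℝ)
    (hskew : ∀ x y : V, ⟪A'' x, y⟫ = -⟪x, A'' y⟫)
    (hcomm : ∀ J ∈ ({J1, J2, J3} : Set (V →ₗ[ℝ] V)), A'' ∘ₗ J = J ∘ₗ A'')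
    (hA : A = A'' + a1 • J1 + a2 • J2 + a3 • J3) :
    ∀ Ja Jb Jc : V →ₗ[ℝ] V,
      ((Ja, Jb, Jc) = (J1, J2, J3) ∨ (Ja, Jb, Jc) = (J2, J3, J1) ∨
        (Ja, Jb, Jc) = (J3, J1, J2)) →
      (n : ℝ) • (A ∘ₗ Ja - Ja ∘ₗ A) =
        ((1 / 2) * ∑ i, ⟪A (e i), Jc (e i)⟫) • Jb -
        ((1 / 2) * ∑ i, ⟪A (e i), Jb (e i)⟫) • Jc := by
  have m1 : J1 ∈ ({J1, J2, J3} : Set (V →ₗ[ℝ] V)) := by simp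
  have m2 : J2 ∈ ({J1, J2, J3} : Set (V →ₗ[ℝ] V)) := by simp
  have m3 : J3 ∈ ({J1, J2, J3} : Set (V →ₗ[ℝ] V)) := by simp
  have ho1 := horth J1 m1; have ho2 := horth J2 m2; have ho3 := horth J3 m3
  have hs1 := hsq J1 m1; have hs2 := hsq J2 m2; have hs3 := hsq J3 m3
  have hc1 : ∀ x : V, A'' (J1 x) = J1 (A'' x) := fun x =>
    LinearMap.ext_iff.mp (hcomm J1 m1) x
  have hc2 : ∀ x : V, A'' (J2 x) = J2 (A'' x) := fun x =>
    LinearMap.ext_iff.mp (hcomm J2 m2) x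
  have hc3 : ∀ x : V, A'' (J3 x) = J3 (A'' x) := fun x =>
    LinearMap.ext_iff.mp (hcomm J3 m3) x
  -- the multiplication table
  have h32 : ∀ x : V, J3 (J2 x) = -J1 x := fun x => by
    rw [← h12, hs2, map_neg]
  have h23 : ∀ x : V, J2 (J3 x) = J1 x := fun x => by
    rw [← h12, h21, h32, neg_neg]
  have h13 : ∀ x : V, J1 (J3 x) = -J2 x := fun x => by
    rw [← h12, hs1]
  have h31 : ∀ x : V, J3 (J1 x) = J2 x := fun x => by
    rw [← h12, h21, map_neg, h13, neg_neg]
  have hApt : ∀ x : V, A x = A'' x + a1 • J1 x + a2 • J2 x + a3 • J3 x := fun x => by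
    rw [hA]; simp
  rintro Ja Jb Jc (h | h | h) <;>
      simp only [Prod.mk.injEq] at h <;>
      obtain ⟨rfl, rfl, rfl⟩ := h
  · exact key_lemma n Ja Jb Jc ho1 ho2 ho3 hs1 hs2 hs3 h12 h23 h31 h21 h32 h13 e A A''
      a1 a2 a3 hskew hc1 hc2 hc3 hApt
  · exact key_lemma n Ja Jb Jc ho2 ho3 ho1 hs2 hs3 hs1 h23 h31 h12 h32 h13 h21 e A A''
      a2 a3 a1 hskew hc2 hc3 hc1 (fun x => by rw [hApt x]; module)
  · exact key_lemma n Ja Jb Jc ho3 ho1 ho2 hs3 hs1 hs2 h31 h12 h23 h13 h21 h32 e A A''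
      a3 a1 a2 hskew hc3 hc1 hc2 (fun x => by rw [hApt x]; module)
end
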